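/- For n ≥ 5 and 2 ≤ m ≤ n−1, the 1-Wasserstein distance between the random-walk measures at u_0 and u_1 in the m-gluing graph K_n +_m K'_n equals (2n−2)(1/n − 1/(n+m)). -/

import Mathlib

open scoped Classical
noncomputable section

namespace OR

variable {V : Type*}

/-- The degree of a vertex. -/
def deg (G : SimpleGraph V) (x : V) : ℕ := Nat.card (G.neighborSet x)

/-- The simple random walk measure at a vertex. -/
def rw (G : SimpleGraph V) (x : V) : V → ℝ :=
  fun v => if G.Adj x v then ((deg G x : ℝ))⁻¹ else 0

/-- A coupling between two measures on the vertex set. -/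
def IsCoupling (μ ν : V → ℝ) (A : V → V → ℝ) : Prop :=
  (∀ u v, 0 ≤ A u v) ∧
  (Function.support fun p : V × V => A p.1 p.2).Finite ∧
  (∀ u, ∑ᶠ v, A u v = μ u) ∧ (∀ v, ∑ᶠ u, A u v = ν v)

/-- The 1-Wasserstein distance w.r.t. the graph distance. -/
def W (G : SimpleGraph V) (μ ν : V → ℝ) : ℝ :=
  sInf { r | ∃ A, IsCoupling μ ν A ∧ r = ∑ᶠ u, ∑ᶠ v, A u v * (G.dist u v : ℝ) }

/-- The Ollivier–Ricci curvature. -/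
def ricci (G : SimpleGraph V) (x y : V) : ℝ :=
  1 - W G (rw G x) (rw G y) / (G.dist x y : ℝ)

/-- The number of common neighbours of `x` and `y`. -/
def tri (G : SimpleGraph V) (x y : V) : ℕ := Nat.card {w | G.Adj x w ∧ G.Adj y w}



/-- Condition for a cross edge `u_i v_j` in the `m`-gluing graph. -/
def cross (m : ℕ) {n : ℕ} (i j : Fin n) : Prop :=
  ((i : ℕ) = 0 ∧ (j : ℕ) = 0) ∨ ((i : ℕ) = 0 ∧ 1 ≤ (j : ℕ) ∧ (j : ℕ) ≤ m) ∨
    ((j : ℕ) = 0 ∧ 1 ≤ (i : ℕ) ∧ (i : ℕ) ≤ m)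

/-- Adjacency of the `m`-gluing graph: `Sum.inl` is `K_n`, `Sum.inr` is `K'_n`. -/
def glueAdj (n m : ℕ) : Fin n ⊕ Fin n → Fin n ⊕ Fin n → Prop
  | .inl i, .inl j => i ≠ j
  | .inr i, .inr j => i ≠ j
  | .inl i, .inr j => cross m i j
  | .inr j, .inl i => cross m i j

/-- The `m`-gluing graph `K_n +_m K'_n`. -/
def glue (n m : ℕ) : SimpleGraph (Fin n ⊕ Fin n) where
  Adj := glueAdj n m
  symm := by
    constructor
    rintro (i | i) (j | j) h <;> simp only [glueAdj] at h ⊢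
    · exact h.symm
    · exact h
    · exact h
    · exact h.symm
  loopless := by
    constructor
    rintro (i | i) h <;> simp only [glueAdj] at h <;> exact h rfl

end OR

namespace GlueAux
open OR SimpleGraph

variable {n m : ℕ}

lemma adj_ll {i j : Fin n} : (glue n m).Adj (.inl i) (.inl j) ↔ i ≠ j := Iff.rfl
lemma adj_rr {i j : Fin n} : (glue n m).Adj (.inr i) (.inr j) ↔ i ≠ j := Iff.rfl
lemma adj_lr {i j : Fin n} : (glue n m).Adj (.inl i) (.inr j) ↔ cross m i j := Iff.rfl
lemma adj_rl {i j : Fin n} : (glue n m).Adj (.inr j) (.inl i) ↔ cross m i j := Iff.rfl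

lemma cross_zero_iff {j : Fin n} (h : 0 < n) : cross m (⟨0, h⟩ : Fin n) j ↔ (j : ℕ) ≤ m := by
  have hv : ((⟨0, h⟩ : Fin n) : ℕ) = 0 := rfl
  unfold cross
  rw [hv]
  omega

lemma cross_one_iff {j : Fin n} (h : 1 < n) (hm : 1 ≤ m) :
    cross m (⟨1, h⟩ : Fin n) j ↔ (j : ℕ) = 0 := by
  have hv : ((⟨1, h⟩ : Fin n) : ℕ) = 1 := rfl
  unfold cross
  rw [hv]
  omega

lemma sum_ite_val {M : Type*} [AddCommMonoid M] (c : ℕ) (hc : c < n) (a : M) :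
    ∑ i : Fin n, (if (i : ℕ) = c then a else 0) = a := by
  have h : ∀ i : Fin n, ((i : ℕ) = c) ↔ (i = ⟨c, hc⟩) := fun i => by rw [Fin.ext_iff]
  simp only [h]
  simp

lemma sum_ite_Icc {M : Type*} [AddCommMonoid M] (hmn : m < n) (a : M) :
    ∑ i : Fin n, (if 1 ≤ (i : ℕ) ∧ (i : ℕ) ≤ m then a else 0) = m • a := by
  rw [Fin.sum_univ_eq_sum_range (fun i => if 1 ≤ i ∧ i ≤ m then a else 0) n]
  have h : ∀ i : ℕ, (1 ≤ i ∧ i ≤ m) ↔ i ∈ Finset.Icc 1 m := fun i => (Finset.mem_Icc).symm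
  simp only [h]
  rw [Finset.sum_ite_mem, Finset.inter_eq_right.mpr, Finset.sum_const, Nat.card_Icc]
  · simp
  · intro x hx
    simp only [Finset.mem_Icc] at hx
    simp only [Finset.mem_range]
    omega

lemma glue_preconnected (hn : 0 < n) : (glue n m).Preconnected := by
  have h0 : ∀ x : Fin n ⊕ Fin n, (glue n m).Reachable x (.inl ⟨0, hn⟩) := by
    rintro (i | j)
    · by_cases h : i = ⟨0, hn⟩
      · subst h; rfl
      · exact (adj_ll.mpr h).reachable
    · have hb : (glue n m).Adj (.inr (⟨0, hn⟩ : Fin n)) (.inl (⟨0, hn⟩ : Fin n)) :=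
        adj_rl.mpr (Or.inl ⟨rfl, rfl⟩)
      by_cases h : j = ⟨0, hn⟩
      · subst h; exact hb.reachable
      · exact (adj_rr.mpr h).reachable.trans hb.reachable
  intro x y
  exact (h0 x).trans (h0 y).symm

/-- distance between `inr j` (1 ≤ j ≤ m) and `inl k` (2 ≤ k) is 2 -/
lemma dist_rl_two (hn : 5 ≤ n) {j k : Fin n} (hj1 : 1 ≤ (j : ℕ)) (hjm : (j : ℕ) ≤ m)
    (hk : 2 ≤ (k : ℕ)) : (glue n m).dist (.inr j) (.inl k) = 2 := by
  have hn0 : 0 < n := by omega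
  have h1 : (glue n m).Adj (.inr j) (.inl (⟨0, hn0⟩ : Fin n)) :=
    adj_rl.mpr (Or.inr (Or.inl ⟨rfl, hj1, hjm⟩))
  have h2 : (glue n m).Adj (.inl (⟨0, hn0⟩ : Fin n)) (.inl k) := by
    refine adj_ll.mpr ?_
    intro h
    have := congrArg Fin.val h
    simp at this
    omega
  have hle : (glue n m).dist (.inr j) (.inl k) ≤ 2 := by
    have := SimpleGraph.dist_le (Walk.cons h1 (Walk.cons h2 Walk.nil))
    simpa using this
  have hpos : 0 < (glue n m).dist (.inr j) (.inl k) :=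
    Reachable.pos_dist_of_ne (glue_preconnected hn0 _ _) (by simp)
  have hne1 : (glue n m).dist (.inr j) (.inl k) ≠ 1 := by
    intro h
    have hadj := (SimpleGraph.dist_eq_one_iff_adj).mp h
    rw [adj_rl] at hadj
    rcases hadj with ⟨h1', _⟩ | ⟨h1', _⟩ | ⟨h1', h2', _⟩ <;> omega
  omega

lemma deg_eq_sum (x : Fin n ⊕ Fin n) :
    deg (glue n m) x
      = (∑ i : Fin n, if (glue n m).Adj x (.inl i) then 1 else 0)
        + ∑ j : Fin n, if (glue n m).Adj x (.inr j) then 1 else 0 := by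
  classical
  rw [deg, Nat.card_eq_fintype_card, Fintype.card_subtype, Finset.card_filter,
    Fintype.sum_sum_type]
  simp [SimpleGraph.mem_neighborSet]

lemma sum_ite_ne (c : ℕ) (hc : c < n) :
    (∑ i : Fin n, if (i : ℕ) ≠ c then (1 : ℕ) else 0) = n - 1 := by
  have h4 : ((∑ i : Fin n, if (i : ℕ) ≠ c then (1 : ℕ) else 0)
      + ∑ i : Fin n, if (i : ℕ) = c then (1 : ℕ) else 0) = n := by
    rw [← Finset.sum_add_distrib]
    have : ∀ i : Fin n, ((if (i : ℕ) ≠ c then (1 : ℕ) else 0)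
        + if (i : ℕ) = c then (1 : ℕ) else 0) = 1 := by
      intro i; by_cases h : (i : ℕ) = c <;> simp [h]
    simp only [this]
    simp
  rw [sum_ite_val c hc] at h4
  omega

/-- degree of u₀ -/
lemma deg_u0 (hn : 5 ≤ n) (hm : 2 ≤ m) (hmn : m ≤ n - 1) :
    deg (glue n m) (.inl (⟨0, Nat.zero_lt_of_lt (by omega : 4 < n)⟩ : Fin n)) = n + m := by
  rw [deg_eq_sum]
  have hl : ∀ i : Fin n,
      (if (glue n m).Adj (.inl (⟨0, by omega⟩ : Fin n)) (.inl i) then (1 : ℕ) else 0)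
      = (if (i : ℕ) ≠ 0 then 1 else 0) := by
    intro i
    have : (glue n m).Adj (.inl (⟨0, by omega⟩ : Fin n)) (.inl i) ↔ (i : ℕ) ≠ 0 := by
      rw [adj_ll, Fin.ext_iff.ne]
      simp [eq_comm]
    simp only [this]
  have hr : ∀ j : Fin n,
      (if (glue n m).Adj (.inl (⟨0, by omega⟩ : Fin n)) (.inr j) then (1 : ℕ) else 0)
      = (if (j : ℕ) = 0 then 1 else 0) + (if 1 ≤ (j : ℕ) ∧ (j : ℕ) ≤ m then 1 else 0) := by
    intro j
    rw [adj_lr]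
    simp only [cross_zero_iff (show 0 < n by omega)]
    by_cases h0 : (j : ℕ) = 0
    · rw [if_pos (by omega), if_pos h0, if_neg (by omega)]
    · by_cases h1 : (j : ℕ) ≤ m
      · rw [if_pos h1, if_neg h0, if_pos (by omega)]
      · rw [if_neg h1, if_neg h0, if_neg (by omega)]
  simp only [hl, hr]
  rw [Finset.sum_add_distrib, sum_ite_ne 0 (by omega), sum_ite_val 0 (by omega),
    sum_ite_Icc (by omega)]
  simp only [smul_eq_mul, mul_one]
  omega

/-- degree of u₁ -/
lemma deg_u1 (hn : 5 ≤ n) (hm : 2 ≤ m) (hmn : m ≤ n - 1) :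
    deg (glue n m) (.inl (⟨1, Nat.lt_of_succ_lt (by omega : 2 < n)⟩ : Fin n)) = n := by
  rw [deg_eq_sum]
  have hl : ∀ i : Fin n,
      (if (glue n m).Adj (.inl (⟨1, by omega⟩ : Fin n)) (.inl i) then (1 : ℕ) else 0)
      = (if (i : ℕ) ≠ 1 then 1 else 0) := by
    intro i
    have : (glue n m).Adj (.inl (⟨1, by omega⟩ : Fin n)) (.inl i) ↔ (i : ℕ) ≠ 1 := by
      rw [adj_ll, Fin.ext_iff.ne]
      simp [eq_comm]
    simp only [this]
  have hr : ∀ j : Fin n,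
      (if (glue n m).Adj (.inl (⟨1, by omega⟩ : Fin n)) (.inr j) then (1 : ℕ) else 0)
      = (if (j : ℕ) = 0 then 1 else 0) := by
    intro j
    rw [adj_lr]
    simp only [cross_one_iff (show 1 < n by omega) (show 1 ≤ m by omega)]
  simp only [hl, hr]
  rw [sum_ite_ne 1 (by omega), sum_ite_val 0 (by omega)]
  omega

lemma sum_ite_two_le (hn : 2 ≤ n) (a : ℝ) :
    ∑ i : Fin n, (if 2 ≤ (i : ℕ) then a else 0) = ((n : ℝ) - 2) * a := by
  have key : ∀ i : Fin n, (if 2 ≤ (i : ℕ) then a else 0)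
      = a - (if (i : ℕ) = 0 then a else 0) - (if (i : ℕ) = 1 then a else 0) := by
    intro i
    by_cases h0 : (i : ℕ) = 0
    · rw [if_neg (by omega), if_pos h0, if_neg (by omega)]; ring
    · by_cases h1 : (i : ℕ) = 1
      · rw [if_neg (by omega), if_neg h0, if_pos h1]; ring
      · rw [if_pos (by omega), if_neg h0, if_neg h1]; ring
  rw [Finset.sum_congr rfl (fun i _ => key i), Finset.sum_sub_distrib, Finset.sum_sub_distrib,
    sum_ite_val 0 (by omega), sum_ite_val 1 hn, Finset.sum_const, Finset.card_univ,
    Fintype.card_fin, nsmul_eq_mul]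
  ring

lemma adj_u0_l (h : 0 < n) {i : Fin n} :
    (glue n m).Adj (.inl ⟨0, h⟩) (.inl i) ↔ (i : ℕ) ≠ 0 := by
  rw [adj_ll, Fin.ext_iff.ne]
  simp [eq_comm]

lemma adj_u1_l (h : 1 < n) {i : Fin n} :
    (glue n m).Adj (.inl ⟨1, h⟩) (.inl i) ↔ (i : ℕ) ≠ 1 := by
  rw [adj_ll, Fin.ext_iff.ne]
  simp [eq_comm]

lemma adj_u0_r (h : 0 < n) {j : Fin n} :
    (glue n m).Adj (.inl ⟨0, h⟩) (.inr j) ↔ (j : ℕ) ≤ m := by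
  rw [adj_lr, cross_zero_iff h]

lemma adj_u1_r (h : 1 < n) (hm : 1 ≤ m) {j : Fin n} :
    (glue n m).Adj (.inl ⟨1, h⟩) (.inr j) ↔ (j : ℕ) = 0 := by
  rw [adj_lr, cross_one_iff h hm]

lemma rw_u0 (hn : 5 ≤ n) (hm : 2 ≤ m) (hmn : m ≤ n - 1) :
    OR.rw (glue n m) (.inl (⟨0, Nat.zero_lt_of_lt (by omega : 4 < n)⟩ : Fin n))
      = fun v => if (glue n m).Adj (.inl (⟨0, Nat.zero_lt_of_lt (by omega : 4 < n)⟩ : Fin n)) v then ((n : ℝ) + m)⁻¹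
        else 0 := by
  funext v
  rw [OR.rw, deg_u0 hn hm hmn]
  push_cast
  rfl

lemma rw_u1 (hn : 5 ≤ n) (hm : 2 ≤ m) (hmn : m ≤ n - 1) :
    OR.rw (glue n m) (.inl (⟨1, Nat.lt_of_succ_lt (by omega : 2 < n)⟩ : Fin n))
      = fun v => if (glue n m).Adj (.inl (⟨1, Nat.lt_of_succ_lt (by omega : 2 < n)⟩ : Fin n)) v then ((n : ℝ))⁻¹
        else 0 := by
  funext v
  rw [OR.rw, deg_u1 hn hm hmn]

/-- the optimal coupling -/
def Amat (n m : ℕ) : Fin n ⊕ Fin n → Fin n ⊕ Fin n → ℝ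
  | .inl i, .inl k =>
      if (i : ℕ) = (k : ℕ) ∧ 2 ≤ (i : ℕ) then ((n : ℝ) + m)⁻¹
      else if (i : ℕ) = 1 ∧ 2 ≤ (k : ℕ) then ((n : ℝ) + m)⁻¹ * ((n : ℝ) - 2)⁻¹
      else 0
  | .inl _, .inr _ => 0
  | .inr j, .inl k =>
      if 1 ≤ (j : ℕ) ∧ (j : ℕ) ≤ m then
        (if (k : ℕ) = 0 then (n : ℝ)⁻¹ * (m : ℝ)⁻¹
         else if 2 ≤ (k : ℕ) then
           ((m : ℝ) * ((n : ℝ) - 2) - n) / ((n : ℝ) * ((n : ℝ) + m) * ((n : ℝ) - 2) * m)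
         else 0)
      else 0
  | .inr j, .inr k =>
      if (j : ℕ) = 0 ∧ (k : ℕ) = 0 then ((n : ℝ) + m)⁻¹
      else if (1 ≤ (j : ℕ) ∧ (j : ℕ) ≤ m) ∧ (k : ℕ) = 0 then (n : ℝ)⁻¹ * ((n : ℝ) + m)⁻¹
      else 0

/-- the dual 1-Lipschitz witness -/
def fdual (m : ℕ) : Fin n ⊕ Fin n → ℝ
  | .inl i => if (i : ℕ) ≤ 1 then 1 else 0
  | .inr j => if (j : ℕ) = 0 then 1 else if (j : ℕ) ≤ m then 2 else 0

lemma Amat_row (hn : 5 ≤ n) (hm : 2 ≤ m) (hmn : m ≤ n - 1) (u : Fin n ⊕ Fin n) :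
    ∑ v, Amat n m u v = OR.rw (glue n m) (.inl (⟨0, Nat.zero_lt_of_lt (by omega : 4 < n)⟩ : Fin n)) u := by
  have hnR : (0:ℝ) < n := by
    have : (5:ℝ) ≤ (n:ℝ) := by exact_mod_cast hn
    linarith
  have hmR : (0:ℝ) < m := by
    have : (2:ℝ) ≤ (m:ℝ) := by exact_mod_cast hm
    linarith
  have hnmR : ((n:ℝ) + m) ≠ 0 := by positivity
  have hn2R : ((n:ℝ) - 2) ≠ 0 := by
    have : (5:ℝ) ≤ (n:ℝ) := by exact_mod_cast hn
    intro h; linarith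
  have hnne : (n:ℝ) ≠ 0 := ne_of_gt hnR
  have hmne : (m:ℝ) ≠ 0 := ne_of_gt hmR
  rw [rw_u0 hn hm hmn, Fintype.sum_sum_type]
  dsimp only
  rcases u with i | j
  · have hz : ∀ k : Fin n, Amat n m (.inl i) (.inr k) = 0 := fun k => rfl
    simp only [hz, Finset.sum_const_zero, add_zero]
    by_cases hi0 : (i:ℕ) = 0
    · have h1 : ∀ k : Fin n, Amat n m (.inl i) (.inl k) = 0 := by
        intro k; simp only [Amat]
        rw [if_neg (by omega), if_neg (by omega)]
      simp only [h1, Finset.sum_const_zero]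
      exact (if_neg (fun hc => ((adj_u0_l (by omega)).mp hc) hi0)).symm
    · by_cases hi1 : (i:ℕ) = 1
      · have h1 : ∀ k : Fin n, Amat n m (.inl i) (.inl k)
            = (if 2 ≤ (k:ℕ) then ((n:ℝ)+m)⁻¹ * ((n:ℝ)-2)⁻¹ else 0) := by
          intro k; simp only [Amat]
          by_cases h2 : 2 ≤ (k:ℕ)
          · rw [if_neg (by omega), if_pos ⟨hi1, h2⟩, if_pos h2]
          · rw [if_neg (by omega), if_neg (by omega), if_neg h2]
        rw [Finset.sum_congr rfl (fun k _ => h1 k), sum_ite_two_le (by omega)]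
        rw [if_pos ((adj_u0_l (by omega)).mpr (by omega))]
        field_simp
      · have h1 : ∀ k : Fin n, Amat n m (.inl i) (.inl k)
            = (if (k:ℕ) = (i:ℕ) then ((n:ℝ)+m)⁻¹ else 0) := by
          intro k; simp only [Amat]
          by_cases h : (i:ℕ) = (k:ℕ)
          · rw [if_pos ⟨h, by omega⟩, if_pos h.symm]
          · rw [if_neg (by omega), if_neg (by omega), if_neg (fun hh => h hh.symm)]
        rw [Finset.sum_congr rfl (fun k _ => h1 k), sum_ite_val (i:ℕ) i.isLt]
        rw [if_pos ((adj_u0_l (by omega)).mpr hi0)]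
  · by_cases hj0 : (j:ℕ) = 0
    · have h1 : ∀ k : Fin n, Amat n m (.inr j) (.inl k) = 0 := by
        intro k; simp only [Amat]; rw [if_neg (by omega)]
      have h2 : ∀ k : Fin n, Amat n m (.inr j) (.inr k)
          = (if (k:ℕ) = 0 then ((n:ℝ)+m)⁻¹ else 0) := by
        intro k; simp only [Amat]
        by_cases h : (k:ℕ) = 0
        · rw [if_pos ⟨hj0, h⟩, if_pos h]
        · rw [if_neg (by omega), if_neg (by omega), if_neg h]
      rw [Finset.sum_congr rfl (fun k _ => h1 k), Finset.sum_congr rfl (fun k _ => h2 k),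
        Finset.sum_const_zero, sum_ite_val 0 (by omega), zero_add]
      rw [if_pos ((adj_u0_r (by omega)).mpr (by omega))]
    · by_cases hjm : (j:ℕ) ≤ m
      · have h1 : ∀ k : Fin n, Amat n m (.inr j) (.inl k)
            = (if (k:ℕ) = 0 then (n:ℝ)⁻¹ * (m:ℝ)⁻¹ else 0)
              + (if 2 ≤ (k:ℕ) then
                  ((m:ℝ)*((n:ℝ)-2) - n) / ((n:ℝ)*((n:ℝ)+m)*((n:ℝ)-2)*m) else 0) := by
          intro k; simp only [Amat]
          rw [if_pos ⟨by omega, hjm⟩]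
          by_cases h0 : (k:ℕ) = 0
          · simp [h0]
          · by_cases h2 : 2 ≤ (k:ℕ) <;> simp [h0, h2]
        have h2 : ∀ k : Fin n, Amat n m (.inr j) (.inr k)
            = (if (k:ℕ) = 0 then (n:ℝ)⁻¹ * ((n:ℝ)+m)⁻¹ else 0) := by
          intro k; simp only [Amat]
          by_cases h : (k:ℕ) = 0
          · rw [if_neg (by omega), if_pos ⟨⟨by omega, hjm⟩, h⟩, if_pos h]
          · rw [if_neg (by omega), if_neg (by omega), if_neg h]
        rw [Finset.sum_congr rfl (fun k _ => h1 k), Finset.sum_congr rfl (fun k _ => h2 k),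
          Finset.sum_add_distrib, sum_ite_val 0 (by omega), sum_ite_val 0 (by omega),
          sum_ite_two_le (by omega)]
        rw [if_pos ((adj_u0_r (by omega)).mpr hjm)]
        field_simp
        ring
      · have h1 : ∀ k : Fin n, Amat n m (.inr j) (.inl k) = 0 := by
          intro k; simp only [Amat]; rw [if_neg (by omega)]
        have h2 : ∀ k : Fin n, Amat n m (.inr j) (.inr k) = 0 := by
          intro k; simp only [Amat]
          rw [if_neg (by omega), if_neg (by omega)]
        rw [Finset.sum_congr rfl (fun k _ => h1 k), Finset.sum_congr rfl (fun k _ => h2 k)]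
        simp only [Finset.sum_const_zero, add_zero]
        exact (if_neg (fun hc => hjm ((adj_u0_r (by omega)).mp hc))).symm

lemma Amat_col (hn : 5 ≤ n) (hm : 2 ≤ m) (hmn : m ≤ n - 1) (v : Fin n ⊕ Fin n) :
    ∑ u, Amat n m u v = OR.rw (glue n m) (.inl (⟨1, Nat.lt_of_succ_lt (by omega : 2 < n)⟩ : Fin n)) v := by
  have hnR : (0:ℝ) < n := by
    have : (5:ℝ) ≤ (n:ℝ) := by exact_mod_cast hn
    linarith
  have hmR : (0:ℝ) < m := by
    have : (2:ℝ) ≤ (m:ℝ) := by exact_mod_cast hm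
    linarith
  have hnmR : ((n:ℝ) + m) ≠ 0 := by positivity
  have hn2R : ((n:ℝ) - 2) ≠ 0 := by
    have : (5:ℝ) ≤ (n:ℝ) := by exact_mod_cast hn
    intro h; linarith
  have hnne : (n:ℝ) ≠ 0 := ne_of_gt hnR
  have hmne : (m:ℝ) ≠ 0 := ne_of_gt hmR
  rw [rw_u1 hn hm hmn, Fintype.sum_sum_type]
  dsimp only
  rcases v with k | k
  · by_cases hk0 : (k:ℕ) = 0
    · have h1 : ∀ i : Fin n, Amat n m (.inl i) (.inl k) = 0 := by
        intro i; simp only [Amat]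
        rw [if_neg (by omega), if_neg (by omega)]
      have h2 : ∀ j : Fin n, Amat n m (.inr j) (.inl k)
          = (if 1 ≤ (j:ℕ) ∧ (j:ℕ) ≤ m then (n:ℝ)⁻¹ * (m:ℝ)⁻¹ else 0) := by
        intro j; simp only [Amat]
        by_cases h : 1 ≤ (j:ℕ) ∧ (j:ℕ) ≤ m
        · rw [if_pos h, if_pos hk0, if_pos h]
        · rw [if_neg h, if_neg h]
      rw [Finset.sum_congr rfl (fun i _ => h1 i), Finset.sum_congr rfl (fun j _ => h2 j),
        sum_ite_Icc (by omega), nsmul_eq_mul]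
      simp only [Finset.sum_const_zero, zero_add]
      rw [if_pos ((adj_u1_l (by omega)).mpr (by omega))]
      field_simp
    · by_cases hk1 : (k:ℕ) = 1
      · have h1 : ∀ i : Fin n, Amat n m (.inl i) (.inl k) = 0 := by
          intro i; simp only [Amat]
          rw [if_neg (by omega), if_neg (by omega)]
        have h2 : ∀ j : Fin n, Amat n m (.inr j) (.inl k) = 0 := by
          intro j; simp only [Amat]
          by_cases h : 1 ≤ (j:ℕ) ∧ (j:ℕ) ≤ m
          · rw [if_pos h, if_neg (by omega), if_neg (by omega)]
          · rw [if_neg h]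
        rw [Finset.sum_congr rfl (fun i _ => h1 i), Finset.sum_congr rfl (fun j _ => h2 j)]
        simp only [Finset.sum_const_zero, add_zero]
        exact (if_neg (fun hc => ((adj_u1_l (by omega)).mp hc) hk1)).symm
      · have h1 : ∀ i : Fin n, Amat n m (.inl i) (.inl k)
            = (if (i:ℕ) = (k:ℕ) then ((n:ℝ)+m)⁻¹ else 0)
              + (if (i:ℕ) = 1 then ((n:ℝ)+m)⁻¹ * ((n:ℝ)-2)⁻¹ else 0) := by
          intro i; simp only [Amat]
          by_cases h : (i:ℕ) = (k:ℕ)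
          · rw [if_pos ⟨h, by omega⟩, if_pos h, if_neg (by omega), add_zero]
          · by_cases h1' : (i:ℕ) = 1
            · rw [if_neg (by omega), if_pos ⟨h1', by omega⟩, if_neg h, if_pos h1', zero_add]
            · rw [if_neg (by omega), if_neg (by omega), if_neg h, if_neg h1', add_zero]
        have h2 : ∀ j : Fin n, Amat n m (.inr j) (.inl k)
            = (if 1 ≤ (j:ℕ) ∧ (j:ℕ) ≤ m then
                ((m:ℝ)*((n:ℝ)-2) - n) / ((n:ℝ)*((n:ℝ)+m)*((n:ℝ)-2)*m) else 0) := by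
          intro j; simp only [Amat]
          by_cases h : 1 ≤ (j:ℕ) ∧ (j:ℕ) ≤ m
          · rw [if_pos h, if_pos h, if_neg (by omega), if_pos (by omega)]
          · rw [if_neg h, if_neg h]
        rw [Finset.sum_congr rfl (fun i _ => h1 i), Finset.sum_congr rfl (fun j _ => h2 j),
          Finset.sum_add_distrib, sum_ite_val (k:ℕ) k.isLt, sum_ite_val 1 (by omega),
          sum_ite_Icc (by omega), nsmul_eq_mul]
        rw [if_pos ((adj_u1_l (by omega)).mpr hk1)]
        field_simp
        ring
  · have h1 : ∀ i : Fin n, Amat n m (.inl i) (.inr k) = 0 := fun i => rfl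
    by_cases hk0 : (k:ℕ) = 0
    · have h2 : ∀ j : Fin n, Amat n m (.inr j) (.inr k)
          = (if (j:ℕ) = 0 then ((n:ℝ)+m)⁻¹ else 0)
            + (if 1 ≤ (j:ℕ) ∧ (j:ℕ) ≤ m then (n:ℝ)⁻¹ * ((n:ℝ)+m)⁻¹ else 0) := by
        intro j; simp only [Amat]
        by_cases h : (j:ℕ) = 0
        · rw [if_pos ⟨h, hk0⟩, if_pos h, if_neg (by omega), add_zero]
        · by_cases h' : (j:ℕ) ≤ m
          · rw [if_neg (by omega), if_pos ⟨⟨by omega, h'⟩, hk0⟩, if_neg h,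
              if_pos (by omega), zero_add]
          · rw [if_neg (by omega), if_neg (by omega), if_neg h, if_neg (by omega), add_zero]
      rw [Finset.sum_congr rfl (fun i _ => h1 i), Finset.sum_congr rfl (fun j _ => h2 j),
        Finset.sum_add_distrib, sum_ite_val 0 (by omega), sum_ite_Icc (by omega), nsmul_eq_mul]
      simp only [Finset.sum_const_zero, zero_add]
      rw [if_pos ((adj_u1_r (by omega) (by omega)).mpr hk0)]
      field_simp
    · have h2 : ∀ j : Fin n, Amat n m (.inr j) (.inr k) = 0 := by
        intro j; simp only [Amat]
        rw [if_neg (by omega), if_neg (by omega)]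
      rw [Finset.sum_congr rfl (fun i _ => h1 i), Finset.sum_congr rfl (fun j _ => h2 j)]
      simp only [Finset.sum_const_zero, add_zero]
      exact (if_neg (fun hc => hk0 ((adj_u1_r (by omega) (by omega)).mp hc))).symm

lemma Amat_cost (hn : 5 ≤ n) (hm : 2 ≤ m) (hmn : m ≤ n - 1) :
    ∑ u, ∑ v, Amat n m u v * ((glue n m).dist u v : ℝ)
      = (2 * (n : ℝ) - 2) * (1 / (n : ℝ) - 1 / ((n : ℝ) + m)) := by
  have hnR : (0:ℝ) < n := by
    have : (5:ℝ) ≤ (n:ℝ) := by exact_mod_cast hn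
    linarith
  have hmR : (0:ℝ) < m := by
    have : (2:ℝ) ≤ (m:ℝ) := by exact_mod_cast hm
    linarith
  have hnmR : ((n:ℝ) + m) ≠ 0 := by positivity
  have hn2R : ((n:ℝ) - 2) ≠ 0 := by
    have : (5:ℝ) ≤ (n:ℝ) := by exact_mod_cast hn
    intro h; linarith
  have hnne : (n:ℝ) ≠ 0 := ne_of_gt hnR
  have hmne : (m:ℝ) ≠ 0 := ne_of_gt hmR
  rw [Fintype.sum_sum_type]
  have hL : ∀ i : Fin n, (∑ v, Amat n m (.inl i) v * ((glue n m).dist (.inl i) v : ℝ))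
      = (if (i:ℕ) = 1 then ((n:ℝ)-2) * (((n:ℝ)+m)⁻¹ * ((n:ℝ)-2)⁻¹) else 0) := by
    intro i
    rw [Fintype.sum_sum_type]
    have hz : ∀ k : Fin n,
        Amat n m (.inl i) (.inr k) * ((glue n m).dist (.inl i) (.inr k) : ℝ) = 0 := by
      intro k
      rw [show Amat n m (.inl i) (.inr k) = 0 from rfl, zero_mul]
    by_cases hi1 : (i:ℕ) = 1
    · have h1 : ∀ k : Fin n,
          Amat n m (.inl i) (.inl k) * ((glue n m).dist (.inl i) (.inl k) : ℝ)
          = (if 2 ≤ (k:ℕ) then ((n:ℝ)+m)⁻¹ * ((n:ℝ)-2)⁻¹ else 0) := by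
        intro k; simp only [Amat]
        by_cases h2 : 2 ≤ (k:ℕ)
        · rw [if_neg (by omega), if_pos ⟨hi1, h2⟩, if_pos h2]
          have hd : (glue n m).dist (.inl i) (.inl k) = 1 :=
            SimpleGraph.dist_eq_one_iff_adj.mpr
              (adj_ll.mpr (fun hik => absurd (congrArg Fin.val hik) (by omega)))
          rw [hd, Nat.cast_one, mul_one]
        · rw [if_neg (by omega), if_neg (by omega), if_neg h2, zero_mul]
      rw [Finset.sum_congr rfl (fun k _ => h1 k), sum_ite_two_le (by omega)]
      simp only [hz, Finset.sum_const_zero, add_zero]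
      rw [if_pos hi1]
    · have h1 : ∀ k : Fin n,
          Amat n m (.inl i) (.inl k) * ((glue n m).dist (.inl i) (.inl k) : ℝ) = 0 := by
        intro k; simp only [Amat]
        by_cases hik : (i:ℕ) = (k:ℕ) ∧ 2 ≤ (i:ℕ)
        · rw [if_pos hik, show i = k from Fin.ext hik.1, SimpleGraph.dist_self,
            Nat.cast_zero, mul_zero]
        · rw [if_neg hik, if_neg (by omega), zero_mul]
      simp only [h1, hz, Finset.sum_const_zero, add_zero]
      rw [if_neg hi1]
  have hR : ∀ j : Fin n, (∑ v, Amat n m (.inr j) v * ((glue n m).dist (.inr j) v : ℝ))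
      = (if 1 ≤ (j:ℕ) ∧ (j:ℕ) ≤ m then
          (n:ℝ)⁻¹ * (m:ℝ)⁻¹
          + ((n:ℝ)-2) * (2 * (((m:ℝ)*((n:ℝ)-2) - n) / ((n:ℝ)*((n:ℝ)+m)*((n:ℝ)-2)*m)))
          + (n:ℝ)⁻¹ * ((n:ℝ)+m)⁻¹
        else 0) := by
    intro j
    rw [Fintype.sum_sum_type]
    by_cases hj : 1 ≤ (j:ℕ) ∧ (j:ℕ) ≤ m
    · have h1 : ∀ k : Fin n,
          Amat n m (.inr j) (.inl k) * ((glue n m).dist (.inr j) (.inl k) : ℝ)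
          = (if (k:ℕ) = 0 then (n:ℝ)⁻¹ * (m:ℝ)⁻¹ else 0)
            + (if 2 ≤ (k:ℕ) then
                2 * (((m:ℝ)*((n:ℝ)-2) - n) / ((n:ℝ)*((n:ℝ)+m)*((n:ℝ)-2)*m)) else 0) := by
        intro k; simp only [Amat]
        rw [if_pos hj]
        by_cases hk0 : (k:ℕ) = 0
        · have hd : (glue n m).dist (.inr j) (.inl k) = 1 :=
            SimpleGraph.dist_eq_one_iff_adj.mpr
              (adj_rl.mpr (Or.inr (Or.inl ⟨hk0, hj.1, hj.2⟩)))
          rw [if_pos hk0, if_pos hk0, if_neg (by omega), add_zero, hd, Nat.cast_one, mul_one]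
        · by_cases hk2 : 2 ≤ (k:ℕ)
          · rw [if_neg hk0, if_pos hk2, if_neg hk0, if_pos hk2, zero_add,
              dist_rl_two hn hj.1 hj.2 hk2]
            push_cast
            ring
          · rw [if_neg hk0, if_neg hk2, if_neg hk0, if_neg hk2, add_zero, zero_mul]
      have h2 : ∀ k : Fin n,
          Amat n m (.inr j) (.inr k) * ((glue n m).dist (.inr j) (.inr k) : ℝ)
          = (if (k:ℕ) = 0 then (n:ℝ)⁻¹ * ((n:ℝ)+m)⁻¹ else 0) := by
        intro k; simp only [Amat]
        by_cases hk0 : (k:ℕ) = 0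
        · have hd : (glue n m).dist (.inr j) (.inr k) = 1 :=
            SimpleGraph.dist_eq_one_iff_adj.mpr
              (adj_rr.mpr (fun hjk => absurd (congrArg Fin.val hjk) (by omega)))
          rw [if_neg (by omega), if_pos ⟨hj, hk0⟩, if_pos hk0, hd, Nat.cast_one, mul_one]
        · rw [if_neg (by omega), if_neg (by omega), if_neg hk0, zero_mul]
      rw [Finset.sum_congr rfl (fun k _ => h1 k), Finset.sum_congr rfl (fun k _ => h2 k),
        Finset.sum_add_distrib, sum_ite_val 0 (by omega), sum_ite_two_le (by omega),
        sum_ite_val 0 (by omega), if_pos hj]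
    · have h1 : ∀ k : Fin n,
          Amat n m (.inr j) (.inl k) * ((glue n m).dist (.inr j) (.inl k) : ℝ) = 0 := by
        intro k; simp only [Amat]
        rw [if_neg hj, zero_mul]
      have h2 : ∀ k : Fin n,
          Amat n m (.inr j) (.inr k) * ((glue n m).dist (.inr j) (.inr k) : ℝ) = 0 := by
        intro k; simp only [Amat]
        by_cases hjk : (j:ℕ) = 0 ∧ (k:ℕ) = 0
        · rw [if_pos hjk, show j = k from Fin.ext (by omega), SimpleGraph.dist_self,
            Nat.cast_zero, mul_zero]
        · rw [if_neg hjk, if_neg (by omega), zero_mul]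
      simp only [h1, h2, Finset.sum_const_zero, add_zero]
      rw [if_neg hj]
  rw [Finset.sum_congr rfl (fun i _ => hL i), Finset.sum_congr rfl (fun j _ => hR j),
    sum_ite_val 1 (by omega), sum_ite_Icc (by omega), nsmul_eq_mul]
  field_simp
  ring

lemma Amat_nonneg (hn : 5 ≤ n) (hm : 2 ≤ m) (hmn : m ≤ n - 1) (u v : Fin n ⊕ Fin n) :
    0 ≤ Amat n m u v := by
  have hnR : (0:ℝ) < n := by
    have : (5:ℝ) ≤ (n:ℝ) := by exact_mod_cast hn
    linarith
  have hmR : (0:ℝ) < m := by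
    have : (2:ℝ) ≤ (m:ℝ) := by exact_mod_cast hm
    linarith
  have hn2R : (0:ℝ) < (n:ℝ) - 2 := by
    have : (5:ℝ) ≤ (n:ℝ) := by exact_mod_cast hn
    linarith
  have hq : 0 ≤ ((m:ℝ)*((n:ℝ)-2) - n) / ((n:ℝ)*((n:ℝ)+m)*((n:ℝ)-2)*m) := by
    apply div_nonneg
    · have h2 : (2:ℝ) ≤ (m:ℝ) := by exact_mod_cast hm
      have h5 : (5:ℝ) ≤ (n:ℝ) := by exact_mod_cast hn
      nlinarith
    · positivity
  have hS : (0:ℝ) ≤ ((n:ℝ)+m)⁻¹ := by positivity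
  have hp : (0:ℝ) ≤ ((n:ℝ)+m)⁻¹ * ((n:ℝ)-2)⁻¹ := by positivity
  have hr1 : (0:ℝ) ≤ (n:ℝ)⁻¹ * (m:ℝ)⁻¹ := by positivity
  have hr0 : (0:ℝ) ≤ (n:ℝ)⁻¹ * ((n:ℝ)+m)⁻¹ := by positivity
  rcases u with i | j <;> rcases v with k | l <;> simp only [Amat] <;>
    first
      | exact le_rfl
      | (split_ifs <;>
          first | exact hS | exact hp | exact hr1 | exact hq | exact hr0 | exact le_rfl)

lemma fdual_lip (hn : 5 ≤ n) (hm : 2 ≤ m) (hmn : m ≤ n - 1) {u v : Fin n ⊕ Fin n}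
    (hu : (glue n m).Adj (.inl (⟨0, Nat.zero_lt_of_lt (by omega : 4 < n)⟩ : Fin n)) u)
    (hv : (glue n m).Adj (.inl (⟨1, Nat.lt_of_succ_lt (by omega : 2 < n)⟩ : Fin n)) v) :
    fdual m u - fdual m v ≤ ((glue n m).dist u v : ℝ) := by
  have hd0 : ∀ a b : Fin n ⊕ Fin n, (0:ℝ) ≤ ((glue n m).dist a b : ℝ) :=
    fun a b => Nat.cast_nonneg _
  have hpre := glue_preconnected (n := n) (m := m) (by omega)
  rcases u with i | j <;> rcases v with k | l
  · rw [adj_u0_l (by omega)] at hu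
    rw [adj_u1_l (by omega)] at hv
    simp only [fdual]
    by_cases hi : (i:ℕ) ≤ 1
    · by_cases hk : (k:ℕ) ≤ 1
      · rw [if_pos hi, if_pos hk]
        have := hd0 (.inl i) (.inl k); linarith
      · rw [if_pos hi, if_neg hk]
        have hd : (glue n m).dist (.inl i) (.inl k) = 1 :=
          SimpleGraph.dist_eq_one_iff_adj.mpr
            (adj_ll.mpr (fun h => absurd (congrArg Fin.val h) (by omega)))
        rw [hd]; norm_num
    · by_cases hk : (k:ℕ) ≤ 1
      · rw [if_neg hi, if_pos hk]
        have := hd0 (.inl i) (.inl k); linarith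
      · rw [if_neg hi, if_neg hk]
        have := hd0 (.inl i) (.inl k); linarith
  · rw [adj_u1_r (by omega) (by omega)] at hv
    simp only [fdual]
    rw [if_pos hv]
    by_cases hi : (i:ℕ) ≤ 1
    · rw [if_pos hi]
      have := hd0 (.inl i) (.inr l); linarith
    · rw [if_neg hi]
      have := hd0 (.inl i) (.inr l); linarith
  · rw [adj_u0_r (by omega)] at hu
    rw [adj_u1_l (by omega)] at hv
    simp only [fdual]
    by_cases hj0 : (j:ℕ) = 0
    · rw [if_pos hj0]
      by_cases hk : (k:ℕ) ≤ 1
      · rw [if_pos hk]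
        have := hd0 (.inr j) (.inl k); linarith
      · rw [if_neg hk]
        have hne : (Sum.inr j : Fin n ⊕ Fin n) ≠ .inl k := by simp
        have hpos := SimpleGraph.Reachable.pos_dist_of_ne (hpre _ _) hne
        have h1 : (1:ℝ) ≤ ((glue n m).dist (.inr j) (.inl k) : ℝ) := by exact_mod_cast hpos
        linarith
    · rw [if_neg hj0, if_pos hu]
      by_cases hk : (k:ℕ) ≤ 1
      · rw [if_pos hk]
        have hd : (glue n m).dist (.inr j) (.inl k) = 1 :=
          SimpleGraph.dist_eq_one_iff_adj.mpr
            (adj_rl.mpr (Or.inr (Or.inl ⟨by omega, by omega, hu⟩)))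
        rw [hd]; norm_num
      · rw [if_neg hk, dist_rl_two hn (by omega) hu (by omega)]; norm_num
  · rw [adj_u0_r (by omega)] at hu
    rw [adj_u1_r (by omega) (by omega)] at hv
    simp only [fdual]
    rw [if_pos hv]
    by_cases hj0 : (j:ℕ) = 0
    · rw [if_pos hj0]
      have := hd0 (.inr j) (.inr l); linarith
    · rw [if_neg hj0, if_pos hu]
      have hd : (glue n m).dist (.inr j) (.inr l) = 1 :=
        SimpleGraph.dist_eq_one_iff_adj.mpr
          (adj_rr.mpr (fun h => absurd (congrArg Fin.val h) (by omega)))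
      rw [hd]; norm_num

lemma sum_f_mu (hn : 5 ≤ n) (hm : 2 ≤ m) (hmn : m ≤ n - 1) :
    ∑ x, OR.rw (glue n m) (.inl (⟨0, Nat.zero_lt_of_lt (by omega : 4 < n)⟩ : Fin n)) x * fdual m x
      = (2 * (m:ℝ) + 2) * ((n:ℝ) + m)⁻¹ := by
  rw [rw_u0 hn hm hmn, Fintype.sum_sum_type]
  dsimp only
  have hl : ∀ i : Fin n,
      (if (glue n m).Adj (.inl (⟨0, by omega⟩ : Fin n)) (.inl i) then ((n:ℝ)+m)⁻¹ else 0)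
        * fdual m (.inl i)
      = (if (i:ℕ) = 1 then ((n:ℝ)+m)⁻¹ else 0) := by
    intro i
    simp only [fdual]
    by_cases hi0 : (i:ℕ) = 0
    · rw [if_neg (fun hc => ((adj_u0_l (by omega)).mp hc) hi0), zero_mul, if_neg (by omega)]
    · by_cases hi1 : (i:ℕ) = 1
      · rw [if_pos ((adj_u0_l (by omega)).mpr hi0), if_pos (by omega), mul_one, if_pos hi1]
      · rw [if_pos ((adj_u0_l (by omega)).mpr hi0), if_neg (by omega), mul_zero, if_neg hi1]
  have hr : ∀ j : Fin n,
      (if (glue n m).Adj (.inl (⟨0, by omega⟩ : Fin n)) (.inr j) then ((n:ℝ)+m)⁻¹ else 0)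
        * fdual m (.inr j)
      = (if (j:ℕ) = 0 then ((n:ℝ)+m)⁻¹ else 0)
        + (if 1 ≤ (j:ℕ) ∧ (j:ℕ) ≤ m then 2 * ((n:ℝ)+m)⁻¹ else 0) := by
    intro j
    simp only [fdual]
    by_cases hj0 : (j:ℕ) = 0
    · rw [if_pos ((adj_u0_r (by omega)).mpr (by omega)), if_pos hj0, mul_one, if_pos hj0,
        if_neg (by omega), add_zero]
    · by_cases hjm : (j:ℕ) ≤ m
      · rw [if_pos ((adj_u0_r (by omega)).mpr hjm), if_neg hj0, if_pos hjm, if_neg hj0,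
          if_pos (by omega), zero_add]
        ring
      · rw [if_neg (fun hc => hjm ((adj_u0_r (by omega)).mp hc)), zero_mul, if_neg hj0,
          if_neg (by omega), add_zero]
  rw [Finset.sum_congr rfl (fun i _ => hl i), Finset.sum_congr rfl (fun j _ => hr j),
    Finset.sum_add_distrib, sum_ite_val 1 (by omega), sum_ite_val 0 (by omega),
    sum_ite_Icc (by omega), nsmul_eq_mul]
  ring

lemma sum_f_nu (hn : 5 ≤ n) (hm : 2 ≤ m) (hmn : m ≤ n - 1) :
    ∑ x, OR.rw (glue n m) (.inl (⟨1, Nat.lt_of_succ_lt (by omega : 2 < n)⟩ : Fin n)) x * fdual m x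
      = 2 * ((n:ℝ))⁻¹ := by
  rw [rw_u1 hn hm hmn, Fintype.sum_sum_type]
  dsimp only
  have hl : ∀ i : Fin n,
      (if (glue n m).Adj (.inl (⟨1, by omega⟩ : Fin n)) (.inl i) then ((n:ℝ))⁻¹ else 0)
        * fdual m (.inl i)
      = (if (i:ℕ) = 0 then ((n:ℝ))⁻¹ else 0) := by
    intro i
    simp only [fdual]
    by_cases hi0 : (i:ℕ) = 0
    · rw [if_pos ((adj_u1_l (by omega)).mpr (by omega)), if_pos (by omega), mul_one, if_pos hi0]
    · by_cases hi1 : (i:ℕ) = 1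
      · rw [if_neg (fun hc => ((adj_u1_l (by omega)).mp hc) hi1), zero_mul, if_neg hi0]
      · rw [if_pos ((adj_u1_l (by omega)).mpr hi1), if_neg (by omega), mul_zero, if_neg hi0]
  have hr : ∀ j : Fin n,
      (if (glue n m).Adj (.inl (⟨1, by omega⟩ : Fin n)) (.inr j) then ((n:ℝ))⁻¹ else 0)
        * fdual m (.inr j)
      = (if (j:ℕ) = 0 then ((n:ℝ))⁻¹ else 0) := by
    intro j
    simp only [fdual]
    by_cases hj0 : (j:ℕ) = 0
    · rw [if_pos ((adj_u1_r (by omega) (by omega)).mpr hj0), if_pos hj0, mul_one, if_pos hj0]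
    · rw [if_neg (fun hc => hj0 ((adj_u1_r (by omega) (by omega)).mp hc)), zero_mul, if_neg hj0]
  rw [Finset.sum_congr rfl (fun i _ => hl i), Finset.sum_congr rfl (fun j _ => hr j),
    sum_ite_val 0 (by omega)]
  ring

lemma W_eq (hn : 5 ≤ n) (hm : 2 ≤ m) (hmn : m ≤ n - 1) :
    OR.W (glue n m) (OR.rw (glue n m) (Sum.inl (⟨0, Nat.zero_lt_of_lt (by omega : 4 < n)⟩ : Fin n)))
        (OR.rw (glue n m) (Sum.inl (⟨1, Nat.lt_of_succ_lt (by omega : 2 < n)⟩ : Fin n)))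
      = (2 * (n : ℝ) - 2) * (1 / (n : ℝ) - 1 / ((n : ℝ) + m)) := by
  have hnR : (0:ℝ) < n := by
    have : (5:ℝ) ≤ (n:ℝ) := by exact_mod_cast hn
    linarith
  have hmR : (0:ℝ) < m := by
    have : (2:ℝ) ≤ (m:ℝ) := by exact_mod_cast hm
    linarith
  have hnmR : ((n:ℝ) + m) ≠ 0 := by positivity
  have hnne : (n:ℝ) ≠ 0 := ne_of_gt hnR
  rw [OR.W]
  have hmem : (2 * (n : ℝ) - 2) * (1 / (n : ℝ) - 1 / ((n : ℝ) + m)) ∈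
      { r | ∃ A, OR.IsCoupling (OR.rw (glue n m) (Sum.inl (⟨0, by omega⟩ : Fin n)))
          (OR.rw (glue n m) (Sum.inl (⟨1, by omega⟩ : Fin n))) A ∧
          r = ∑ᶠ u, ∑ᶠ v, A u v * ((glue n m).dist u v : ℝ) } := by
    refine ⟨Amat n m, ⟨Amat_nonneg hn hm hmn, Set.toFinite _, ?_, ?_⟩, ?_⟩
    · intro u
      rw [finsum_eq_sum_of_fintype]
      exact Amat_row hn hm hmn u
    · intro v
      rw [finsum_eq_sum_of_fintype]
      exact Amat_col hn hm hmn v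
    · simp only [finsum_eq_sum_of_fintype]
      exact (Amat_cost hn hm hmn).symm
  have hlb : ∀ r ∈ { r | ∃ A, OR.IsCoupling (OR.rw (glue n m) (Sum.inl (⟨0, by omega⟩ : Fin n)))
      (OR.rw (glue n m) (Sum.inl (⟨1, by omega⟩ : Fin n))) A ∧
      r = ∑ᶠ u, ∑ᶠ v, A u v * ((glue n m).dist u v : ℝ) },
      (2 * (n : ℝ) - 2) * (1 / (n : ℝ) - 1 / ((n : ℝ) + m)) ≤ r := by
    rintro r ⟨A, ⟨hA0, hAfin, hrow, hcol⟩, rfl⟩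
    simp only [finsum_eq_sum_of_fintype] at hrow hcol ⊢
    have key : ∀ u v : Fin n ⊕ Fin n,
        A u v * (fdual m u - fdual m v) ≤ A u v * ((glue n m).dist u v : ℝ) := by
      intro u v
      rcases eq_or_lt_of_le (hA0 u v) with h | h
      · rw [← h, zero_mul, zero_mul]
      · have hμ : (0:ℝ) < OR.rw (glue n m) (Sum.inl (⟨0, by omega⟩ : Fin n)) u := by
          rw [← hrow u]
          exact lt_of_lt_of_le h (Finset.single_le_sum (fun w _ => hA0 u w) (Finset.mem_univ v))
        have hν : (0:ℝ) < OR.rw (glue n m) (Sum.inl (⟨1, by omega⟩ : Fin n)) v := by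
          rw [← hcol v]
          exact lt_of_lt_of_le h (Finset.single_le_sum (fun w _ => hA0 w v) (Finset.mem_univ u))
        simp only [OR.rw] at hμ hν
        split_ifs at hμ with hadjU
        · split_ifs at hν with hadjV
          · exact mul_le_mul_of_nonneg_left (fdual_lip hn hm hmn hadjU hadjV) h.le
          · exact absurd hν (lt_irrefl 0)
        · exact absurd hμ (lt_irrefl 0)
    have e1 : ∑ u : Fin n ⊕ Fin n, ∑ v : Fin n ⊕ Fin n, A u v * fdual m u
        = ∑ u : Fin n ⊕ Fin n,
            OR.rw (glue n m) (Sum.inl (⟨0, by omega⟩ : Fin n)) u * fdual m u := by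
      refine Finset.sum_congr rfl (fun u _ => ?_)
      rw [← Finset.sum_mul, hrow u]
    have e2 : ∑ u : Fin n ⊕ Fin n, ∑ v : Fin n ⊕ Fin n, A u v * fdual m v
        = ∑ v : Fin n ⊕ Fin n,
            OR.rw (glue n m) (Sum.inl (⟨1, by omega⟩ : Fin n)) v * fdual m v := by
      rw [Finset.sum_comm]
      refine Finset.sum_congr rfl (fun v _ => ?_)
      rw [← Finset.sum_mul, hcol v]
    calc (2 * (n : ℝ) - 2) * (1 / (n : ℝ) - 1 / ((n : ℝ) + m))
        = (∑ u : Fin n ⊕ Fin n,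
            OR.rw (glue n m) (Sum.inl (⟨0, by omega⟩ : Fin n)) u * fdual m u)
          - ∑ v : Fin n ⊕ Fin n,
            OR.rw (glue n m) (Sum.inl (⟨1, by omega⟩ : Fin n)) v * fdual m v := by
          rw [sum_f_mu hn hm hmn, sum_f_nu hn hm hmn]
          field_simp
          ring
      _ = ∑ u : Fin n ⊕ Fin n, ∑ v : Fin n ⊕ Fin n, A u v * (fdual m u - fdual m v) := by
          simp only [mul_sub, Finset.sum_sub_distrib]
          rw [e1, e2]
      _ ≤ ∑ u : Fin n ⊕ Fin n, ∑ v : Fin n ⊕ Fin n, A u v * ((glue n m).dist u v : ℝ) :=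
          Finset.sum_le_sum (fun u _ => Finset.sum_le_sum (fun v _ => key u v))
  exact le_antisymm (csInf_le ⟨_, hlb⟩ hmem) (le_csInf ⟨_, hmem⟩ hlb)

end GlueAux


theorem glue_wasserstein_u0_u1 (n m : ℕ) (hn : 5 ≤ n) (hm : 2 ≤ m) (hm' : m ≤ n - 1) :
    OR.W (OR.glue n m) (OR.rw (OR.glue n m) (Sum.inl (⟨0, by omega⟩ : Fin n)))
        (OR.rw (OR.glue n m) (Sum.inl (⟨1, by omega⟩ : Fin n)))
      = (2 * (n : ℝ) - 2) * (1 / (n : ℝ) - 1 / ((n : ℝ) + m)) := GlueAux.W_eq hn hm hm'
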